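/- arXiv:2507.22312 — 2 statements merged into one kernel-verified Lean document; each statement's English description precedes it below -/
import Mathlib

section
/- Let D ∈ {0,1}, Z a random vector, Y integrable, m(Z) = P(D=1|Z) with ε < m(Z) < 1-ε a.s. for some ε ∈ (0,1/2), and g₁(Z) = E[Y | D=1, Z]. For any bounded measurable working models g̃₁(Z) and m̃(Z) with m̃(Z) ≥ ε a.s., the following exact bias identity holds: E[ g̃₁(Z) + D(Y - g̃₁(Z))/m̃(Z) ] - E[ g₁(Z) ] = E[ (g₁(Z) - g̃₁(Z)) · ( m(Z)/m̃(Z) - 1 ) ]. In particular the left-hand side vanishes whenever g̃₁ = g₁ a.s. or m̃ = m a.s. (double robustness). -/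
open MeasureTheory

lemma key_pullout {Ω : Type*} {m0 : MeasurableSpace Ω} (μ : Measure Ω) [IsProbabilityMeasure μ]
    {m' : MeasurableSpace Ω} (hle : m' ≤ m0) (h X k : Ω → ℝ)
    (hh : StronglyMeasurable[m'] h) (C : ℝ) (hC : ∀ᵐ ω ∂μ, |h ω| ≤ C)
    (hX : Integrable X μ) (hk : μ[X|m'] =ᵐ[μ] k) :
    ∫ ω, h ω * X ω ∂μ = ∫ ω, h ω * k ω ∂μ := by
  have hhX : Integrable (fun ω => h ω * X ω) μ :=
    hX.bdd_mul ((hh.mono hle).aestronglyMeasurable) (by simpa [Real.norm_eq_abs] using hC)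
  haveI : SigmaFinite (μ.trim hle) := by
    have : IsFiniteMeasure (μ.trim hle) := isFiniteMeasure_trim hle
    infer_instance
  have h1 : μ[fun ω => h ω * X ω|m'] =ᵐ[μ] fun ω => h ω * (μ[X|m']) ω :=
    condExp_mul_of_stronglyMeasurable_left hh hhX hX
  calc ∫ ω, h ω * X ω ∂μ = ∫ ω, (μ[fun ω => h ω * X ω|m']) ω ∂μ := (integral_condExp hle).symm
    _ = ∫ ω, h ω * k ω ∂μ := by
        refine integral_congr_ae ?_
        filter_upwards [h1, hk] with ω h1 h2
        rw [h1, h2]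

/-- Exact bias identity / double robustness of the AIPW estimand: for any bounded
measurable working models `g̃₁` and `m̃` with `m̃(Z) ≥ ε`,
`E[g̃₁(Z) + D(Y - g̃₁(Z))/m̃(Z)] - E[g₁(Z)] = E[(g₁(Z) - g̃₁(Z))(m(Z)/m̃(Z) - 1)]`. -/
theorem stmt_6 {Ω γ : Type*} [MeasurableSpace Ω] [MeasurableSpace γ]
    (μ : Measure Ω) [IsProbabilityMeasure μ]
    (D Y : Ω → ℝ) (Z : Ω → γ) (m g₁ gt₁ mt : γ → ℝ)
    (hD : ∀ ω, D ω = 0 ∨ D ω = 1)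
    (hDmeas : Measurable D) (hY : Integrable Y μ) (hZ : Measurable Z)
    (hm : Measurable m) (hg₁ : Measurable g₁)
    (hgt₁ : Measurable gt₁) (hmt : Measurable mt)
    (Cg : ℝ) (hgt₁bdd : ∀ z, |gt₁ z| ≤ Cg) (Cm : ℝ) (hmtbdd : ∀ z, |mt z| ≤ Cm)
    (ε : ℝ) (hε : ε ∈ Set.Ioo (0 : ℝ) (1 / 2))
    (hoverlap : ∀ᵐ ω ∂μ, ε < m (Z ω) ∧ m (Z ω) < 1 - ε)
    (hmtε : ∀ᵐ ω ∂μ, ε ≤ mt (Z ω))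
    (hmZ : μ[D | MeasurableSpace.comap Z inferInstance] =ᵐ[μ] fun ω => m (Z ω))
    (hg1Z : μ[fun ω => D ω * Y ω | MeasurableSpace.comap Z inferInstance]
        =ᵐ[μ] fun ω => g₁ (Z ω) * m (Z ω))
    (hg1int : Integrable (fun ω => g₁ (Z ω)) μ) :
    ((∫ ω, gt₁ (Z ω) + D ω * (Y ω - gt₁ (Z ω)) / mt (Z ω) ∂μ) - (∫ ω, g₁ (Z ω) ∂μ)
      = ∫ ω, (g₁ (Z ω) - gt₁ (Z ω)) * (m (Z ω) / mt (Z ω) - 1) ∂μ) ∧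
    (((fun ω => gt₁ (Z ω)) =ᵐ[μ] fun ω => g₁ (Z ω)) ∨
        ((fun ω => mt (Z ω)) =ᵐ[μ] fun ω => m (Z ω)) →
      (∫ ω, gt₁ (Z ω) + D ω * (Y ω - gt₁ (Z ω)) / mt (Z ω) ∂μ)
        - (∫ ω, g₁ (Z ω) ∂μ) = 0) := by
  have hεpos : (0:ℝ) < ε := hε.1
  set m' : MeasurableSpace Ω := MeasurableSpace.comap Z inferInstance with hm'def
  have hle : m' ≤ _ := hZ.comap_le
  have hZm' : @Measurable Ω γ m' _ Z := Measurable.of_comap_le le_rfl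
  -- a.e. bounds
  have hinv_bound : ∀ᵐ ω ∂μ, |(mt (Z ω))⁻¹| ≤ ε⁻¹ := by
    filter_upwards [hmtε] with ω hω
    have hpos : 0 < mt (Z ω) := lt_of_lt_of_le hεpos hω
    rw [abs_of_nonneg (inv_nonneg.mpr hpos.le)]
    exact inv_anti₀ hεpos hω
  have hDbd : ∀ ω, ‖D ω‖ ≤ 1 := by
    intro ω; rcases hD ω with h | h <;> simp [h]
  have hgtmt_bound : ∀ᵐ ω ∂μ, |gt₁ (Z ω) * (mt (Z ω))⁻¹| ≤ Cg * ε⁻¹ := by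
    filter_upwards [hinv_bound] with ω hω
    rw [abs_mul]
    exact mul_le_mul (hgt₁bdd (Z ω)) hω (abs_nonneg _)
      ((abs_nonneg (gt₁ (Z ω))).trans (hgt₁bdd (Z ω)))
  -- measurability wrt m'
  have mInvM : @Measurable Ω ℝ m' _ fun ω => (mt (Z ω))⁻¹ :=
    @Measurable.comp Ω γ ℝ m' _ _ _ _ hmt.inv hZm'
  have mGtM : @Measurable Ω ℝ m' _ fun ω => gt₁ (Z ω) :=
    @Measurable.comp Ω γ ℝ m' _ _ _ _ hgt₁ hZm'
  have mGtInvM : @Measurable Ω ℝ m' _ fun ω => gt₁ (Z ω) * (mt (Z ω))⁻¹ :=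
    Measurable.mul (α := Ω) (m := m') mGtM mInvM
  have smInv : StronglyMeasurable[m'] fun ω => (mt (Z ω))⁻¹ := mInvM.stronglyMeasurable
  have smGtInv : StronglyMeasurable[m'] fun ω => gt₁ (Z ω) * (mt (Z ω))⁻¹ :=
    mGtInvM.stronglyMeasurable
  -- integrability
  have hDint : Integrable D μ :=
    (integrable_const (1:ℝ)).mono' hDmeas.aestronglyMeasurable (Filter.Eventually.of_forall hDbd)
  have hDY : Integrable (fun ω => D ω * Y ω) μ :=
    hY.bdd_mul hDmeas.aestronglyMeasurable (Filter.Eventually.of_forall hDbd)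
  have hgtint : Integrable (fun ω => gt₁ (Z ω)) μ :=
    (integrable_const Cg).mono' (hgt₁.comp hZ).aestronglyMeasurable
      (Filter.Eventually.of_forall fun ω => by simpa [Real.norm_eq_abs] using hgt₁bdd (Z ω))
  have hg1m : Integrable (fun ω => g₁ (Z ω) * m (Z ω)) μ := integrable_condExp.congr hg1Z
  have hmZint : Integrable (fun ω => m (Z ω)) μ := integrable_condExp.congr hmZ
  have hB : Integrable (fun ω => (mt (Z ω))⁻¹ * (D ω * Y ω)) μ :=
    hDY.bdd_mul ((smInv.mono hle).aestronglyMeasurable)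
      (by simpa only [Real.norm_eq_abs] using hinv_bound)
  have hC : Integrable (fun ω => gt₁ (Z ω) * (mt (Z ω))⁻¹ * D ω) μ :=
    hDint.bdd_mul ((smGtInv.mono hle).aestronglyMeasurable)
      (by simpa only [Real.norm_eq_abs] using hgtmt_bound)
  have hP : Integrable (fun ω => (mt (Z ω))⁻¹ * (g₁ (Z ω) * m (Z ω))) μ :=
    hg1m.bdd_mul ((smInv.mono hle).aestronglyMeasurable)
      (by simpa only [Real.norm_eq_abs] using hinv_bound)
  have hQ : Integrable (fun ω => gt₁ (Z ω) * (mt (Z ω))⁻¹ * m (Z ω)) μ :=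
    hmZint.bdd_mul ((smGtInv.mono hle).aestronglyMeasurable)
      (by simpa only [Real.norm_eq_abs] using hgtmt_bound)
  -- the two pull-out identities
  have E1 : ∫ ω, (mt (Z ω))⁻¹ * (D ω * Y ω) ∂μ
      = ∫ ω, (mt (Z ω))⁻¹ * (g₁ (Z ω) * m (Z ω)) ∂μ :=
    key_pullout μ hle _ _ _ smInv ε⁻¹ hinv_bound hDY hg1Z
  have E2 : ∫ ω, gt₁ (Z ω) * (mt (Z ω))⁻¹ * D ω ∂μ
      = ∫ ω, gt₁ (Z ω) * (mt (Z ω))⁻¹ * m (Z ω) ∂μ :=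
    key_pullout μ hle _ _ _ smGtInv (Cg * ε⁻¹) hgtmt_bound hDint hmZ
  -- split the LHS integral
  have hLHS : (∫ ω, gt₁ (Z ω) + D ω * (Y ω - gt₁ (Z ω)) / mt (Z ω) ∂μ)
      = (∫ ω, gt₁ (Z ω) ∂μ) + ((∫ ω, (mt (Z ω))⁻¹ * (D ω * Y ω) ∂μ)
          - ∫ ω, gt₁ (Z ω) * (mt (Z ω))⁻¹ * D ω ∂μ) := by
    have heq : (fun ω => gt₁ (Z ω) + D ω * (Y ω - gt₁ (Z ω)) / mt (Z ω))
        = fun ω => gt₁ (Z ω) + ((mt (Z ω))⁻¹ * (D ω * Y ω)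
            - gt₁ (Z ω) * (mt (Z ω))⁻¹ * D ω) := by
      funext ω; rw [div_eq_mul_inv]; ring
    have hBC : Integrable (fun ω => (mt (Z ω))⁻¹ * (D ω * Y ω)
        - gt₁ (Z ω) * (mt (Z ω))⁻¹ * D ω) μ := hB.sub hC
    rw [heq, integral_add hgtint hBC, integral_sub hB hC]
  -- split the RHS integral
  have hRHS : (∫ ω, (g₁ (Z ω) - gt₁ (Z ω)) * (m (Z ω) / mt (Z ω) - 1) ∂μ)
      = (∫ ω, (mt (Z ω))⁻¹ * (g₁ (Z ω) * m (Z ω)) ∂μ)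
        - (∫ ω, gt₁ (Z ω) * (mt (Z ω))⁻¹ * m (Z ω) ∂μ)
        - (∫ ω, g₁ (Z ω) ∂μ) + ∫ ω, gt₁ (Z ω) ∂μ := by
    have heq : (fun ω => (g₁ (Z ω) - gt₁ (Z ω)) * (m (Z ω) / mt (Z ω) - 1))
        = fun ω => ((mt (Z ω))⁻¹ * (g₁ (Z ω) * m (Z ω))
            - gt₁ (Z ω) * (mt (Z ω))⁻¹ * m (Z ω) - g₁ (Z ω)) + gt₁ (Z ω) := by
      funext ω; rw [div_eq_mul_inv]; ring
    have hPQ : Integrable (fun ω => (mt (Z ω))⁻¹ * (g₁ (Z ω) * m (Z ω))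
        - gt₁ (Z ω) * (mt (Z ω))⁻¹ * m (Z ω)) μ := hP.sub hQ
    have hPQg : Integrable (fun ω => (mt (Z ω))⁻¹ * (g₁ (Z ω) * m (Z ω))
        - gt₁ (Z ω) * (mt (Z ω))⁻¹ * m (Z ω) - g₁ (Z ω)) μ := hPQ.sub hg1int
    rw [heq, integral_add hPQg hgtint, integral_sub hPQ hg1int, integral_sub hP hQ]
  have part1 : (∫ ω, gt₁ (Z ω) + D ω * (Y ω - gt₁ (Z ω)) / mt (Z ω) ∂μ)
      - (∫ ω, g₁ (Z ω) ∂μ)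
      = ∫ ω, (g₁ (Z ω) - gt₁ (Z ω)) * (m (Z ω) / mt (Z ω) - 1) ∂μ := by
    rw [hLHS, hRHS, E1, E2]; ring
  refine ⟨part1, ?_⟩
  rintro (hgg | hmm) <;> rw [part1]
  · refine integral_eq_zero_of_ae ?_
    filter_upwards [hgg] with ω hω
    simp [hω]
  · refine integral_eq_zero_of_ae ?_
    filter_upwards [hmm, hoverlap] with ω h1 h2
    rw [h1, div_self (lt_trans hεpos h2.1).ne', sub_self, mul_zero]
    simp
end

section
/- Let D ∈ {0,1}, let Z* and Z̲ be random vectors with D conditionally independent of Z̲ given Z*, let m(Z*) = P(D = 1 | Z*) satisfy ε < m(Z*) < 1 - ε a.s. for some ε ∈ (0,1/2), let Y be a bounded random variable, and let s(Z̲) be any measurable function of Z̲. Define g₁(Z*, s(Z̲)) = E[Y | D = 1, Z*, s(Z̲)]. Then E[ D·(Y - g₁(Z*, s(Z̲))) / m(Z*) ] = 0 and E[ g₁(Z*, s(Z̲)) ] = E[ E[Y | D = 1, Z*] ]. -/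
/-!
Write `𝓖 = σ(Z*)` and `𝓗 = σ(Z*, s(Z̲))`. Conditional independence of `D` and `Z̲` given `Z*`
makes the propensities agree: `E[D | 𝓗] = E[D | 𝓖] = m(Z*)`; it suffices to compare set
integrals over the rectangles `{Z* ∈ A, s(Z̲) ∈ B}`, a π-system generating `𝓗`. Hence
`g₁ = E[DY | 𝓗] / m`, and conditioning on `𝓗` turns `D/m` into `1`, which gives the first identity.
For the second, the tower property gives
`G₁ · m = E[DY | 𝓖] = E[E[DY | 𝓗] | 𝓖] = E[g₁ · m | 𝓖] = m · E[g₁ | 𝓖]`,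
so `G₁ = E[g₁ | 𝓖]` and the two have the same mean. Strict overlap and the bound on `Y` keep every
ratio bounded, hence integrable.
-/

open MeasureTheory ProbabilityTheory

section PiSystem

variable {Ω : Type*} {m m0 : MeasurableSpace Ω} {μ : Measure Ω}

theorem setIntegral_eq_of_isPiSystem {S : Set (Set Ω)} (hgen : m = MeasurableSpace.generateFrom S)
    (hS : IsPiSystem S) {f g : Ω → ℝ} (hf : Integrable f μ) (hg : Integrable g μ)
    (huniv : ∫ ω, f ω ∂μ = ∫ ω, g ω ∂μ) (hfg : ∀ s ∈ S, ∫ ω in s, f ω ∂μ = ∫ ω in s, g ω ∂μ)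
    (hm : m ≤ m0) {s : Set Ω} (hs : MeasurableSet[m] s) :
    ∫ ω in s, f ω ∂μ = ∫ ω in s, g ω ∂μ := by
  induction s, hs using MeasurableSpace.induction_on_inter hgen hS with
  | empty => simp
  | basic s hs => exact hfg s hs
  | compl s hs ih =>
    have hf' := integral_add_compl (hm s hs) hf
    have hg' := integral_add_compl (hm s hs) hg
    linarith
  | iUnion s hdisj hs ih =>
    rw [integral_iUnion (fun i => hm _ (hs i)) hdisj hf.integrableOn,
      integral_iUnion (fun i => hm _ (hs i)) hdisj hg.integrableOn]
    exact tsum_congr ih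

end PiSystem

section CondIndep

variable {Ω α β κ : Type*} {mΩ : MeasurableSpace Ω}
  [MeasurableSpace α] [MeasurableSpace β] [MeasurableSpace κ] {μ : Measure Ω} [IsFiniteMeasure μ]

theorem comap_prodMk_eq_generateFrom {X : Ω → α} {V : Ω → κ} :
    MeasurableSpace.comap (fun ω => (X ω, V ω)) inferInstance =
      MeasurableSpace.generateFrom
        ((fun c => (fun ω => (X ω, V ω)) ⁻¹' c) ''
          Set.image2 (· ×ˢ ·) {a : Set α | MeasurableSet a} {b : Set κ | MeasurableSet b}) := by
  rw [← MeasurableSpace.comap_generateFrom, generateFrom_prod]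

theorem comap_le_comap_prodMk (X : Ω → α) (V : Ω → κ) :
    MeasurableSpace.comap X inferInstance
      ≤ MeasurableSpace.comap (fun ω => (X ω, V ω)) inferInstance :=
  MeasurableSpace.comap_prodMk X V ▸ le_sup_left

theorem setIntegral_condExp_indicator_inter_preimage [StandardBorelSpace Ω] {X : Ω → α}
    {f : Ω → β} {V : Ω → κ} (hX : Measurable X) (hf : Measurable f) (hV : Measurable V)
    (hfV : CondIndepFun (MeasurableSpace.comap X inferInstance) hX.comap_le f V μ)
    {t : Set β} (ht : MeasurableSet t) {a : Set α} (ha : MeasurableSet a) {b : Set κ}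
    (hb : MeasurableSet b) :
    ∫ ω in X ⁻¹' a ∩ V ⁻¹' b, (μ⟦f ⁻¹' t | MeasurableSpace.comap X inferInstance⟧) ω ∂μ
      = ∫ ω in X ⁻¹' a ∩ V ⁻¹' b, (f ⁻¹' t).indicator (fun _ => (1 : ℝ)) ω ∂μ := by
  have hG : MeasurableSet[MeasurableSpace.comap X inferInstance] (X ⁻¹' a) := ⟨a, ha, rfl⟩
  have hA : MeasurableSet (f ⁻¹' t) := hf ht
  have hB : MeasurableSet (V ⁻¹' b) := hV hb
  set p := μ⟦f ⁻¹' t | MeasurableSpace.comap X inferInstance⟧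
  have hpB : (V ⁻¹' b).indicator (fun _ => (1 : ℝ)) * p = (V ⁻¹' b).indicator p := by
    ext ω; by_cases h : ω ∈ V ⁻¹' b <;> simp [h]
  have hpB_int : Integrable ((V ⁻¹' b).indicator (fun _ => (1 : ℝ)) * p) μ :=
    hpB ▸ integrable_condExp.indicator hB
  have hpull : μ[(V ⁻¹' b).indicator (fun _ => (1 : ℝ)) * p | MeasurableSpace.comap X inferInstance]
      =ᵐ[μ] μ⟦V ⁻¹' b | MeasurableSpace.comap X inferInstance⟧ * p :=
    condExp_mul_of_stronglyMeasurable_right stronglyMeasurable_condExp hpB_int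
      ((integrable_const 1).indicator hB)
  have hprod := (condIndepFun_iff_condExp_inter_preimage_eq_mul hf hV).mp hfV t b ht hb
  calc ∫ ω in X ⁻¹' a ∩ V ⁻¹' b, p ω ∂μ
      = ∫ ω in X ⁻¹' a, ((V ⁻¹' b).indicator (fun _ => (1 : ℝ)) * p) ω ∂μ := by
        rw [hpB, setIntegral_indicator hB]
    _ = ∫ ω in X ⁻¹' a, (μ⟦f ⁻¹' t ∩ V ⁻¹' b | MeasurableSpace.comap X inferInstance⟧) ω ∂μ := by
        rw [← setIntegral_condExp hX.comap_le hpB_int hG]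
        refine setIntegral_congr_ae (hX.comap_le _ hG) ?_
        filter_upwards [hpull, hprod] with ω h1 h2 _
        rw [h1, h2, Pi.mul_apply, mul_comm]
    _ = ∫ ω in X ⁻¹' a ∩ V ⁻¹' b, (f ⁻¹' t).indicator (fun _ => (1 : ℝ)) ω ∂μ := by
        rw [setIntegral_condExp hX.comap_le ((integrable_const 1).indicator (hA.inter hB)) hG,
          setIntegral_indicator (hA.inter hB), setIntegral_indicator hA, Set.inter_comm _ (V ⁻¹' b),
          ← Set.inter_assoc, Set.inter_comm (X ⁻¹' a)]

theorem condExp_indicator_comap_prodMk_ae_eq [StandardBorelSpace Ω] {X : Ω → α} {f : Ω → β}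
    {V : Ω → κ} (hX : Measurable X) (hf : Measurable f) (hV : Measurable V)
    (hfV : CondIndepFun (MeasurableSpace.comap X inferInstance) hX.comap_le f V μ)
    {t : Set β} (ht : MeasurableSet t) :
    μ⟦f ⁻¹' t | MeasurableSpace.comap (fun ω => (X ω, V ω)) inferInstance⟧
      =ᵐ[μ] μ⟦f ⁻¹' t | MeasurableSpace.comap X inferInstance⟧ := by
  have hW : Measurable fun ω => (X ω, V ω) := hX.prodMk hV
  have hA : MeasurableSet (f ⁻¹' t) := hf ht
  refine (ae_eq_condExp_of_forall_setIntegral_eq hW.comap_le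
    ((integrable_const 1).indicator hA) (fun _ _ _ => integrable_condExp.integrableOn)
    (fun s hs _ => ?_)
    (stronglyMeasurable_condExp.mono (comap_le_comap_prodMk X V)).aestronglyMeasurable).symm
  refine setIntegral_eq_of_isPiSystem comap_prodMk_eq_generateFrom (isPiSystem_prod.comap _)
    integrable_condExp ((integrable_const 1).indicator hA) (integral_condExp hX.comap_le) ?_
    hW.comap_le hs
  rintro _ ⟨_, ⟨a, ha, b, hb, rfl⟩, rfl⟩
  exact setIntegral_condExp_indicator_inter_preimage hX hf hV hfV ht ha hb

theorem indicator_preimage_one_eq_self {D : Ω → ℝ} (hD : ∀ ω, D ω = 0 ∨ D ω = 1) :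
    (D ⁻¹' {1}).indicator (fun _ => (1 : ℝ)) = D := by
  ext ω
  rcases hD ω with h | h <;> simp [h]

theorem condExp_comap_prodMk_ae_eq_of_zero_or_one [StandardBorelSpace Ω] {X : Ω → α}
    {V : Ω → κ} {D : Ω → ℝ} (hX : Measurable X) (hD01 : ∀ ω, D ω = 0 ∨ D ω = 1)
    (hD : Measurable D) (hV : Measurable V)
    (hDV : CondIndepFun (MeasurableSpace.comap X inferInstance) hX.comap_le D V μ) :
    μ[D | MeasurableSpace.comap (fun ω => (X ω, V ω)) inferInstance]
      =ᵐ[μ] μ[D | MeasurableSpace.comap X inferInstance] := by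
  simpa only [indicator_preimage_one_eq_self hD01] using
    condExp_indicator_comap_prodMk_ae_eq hX hD hV hDV (measurableSet_singleton 1)

end CondIndep

section Regression

variable {Ω : Type*} {m m0 : MeasurableSpace Ω} {μ : Measure Ω} {D Y : Ω → ℝ} {C ε : ℝ}

/-- The regression `E[Y | D = 1, m]` of `Y` on `m` among the treated, for an indicator `D`. -/
noncomputable def condRegression (μ : Measure Ω) (m : MeasurableSpace Ω) (D Y : Ω → ℝ) :
    Ω → ℝ :=
  fun ω => μ[D * Y | m] ω / μ[D | m] ω

theorem stronglyMeasurable_condRegression :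
    StronglyMeasurable[m] (condRegression μ m D Y) :=
  (stronglyMeasurable_condExp.measurable.div stronglyMeasurable_condExp.measurable).stronglyMeasurable

theorem condRegression_mul_condExp (hpos : ∀ᵐ ω ∂μ, μ[D | m] ω ≠ 0) :
    condRegression μ m D Y * μ[D | m] =ᵐ[μ] μ[D * Y | m] := by
  filter_upwards [hpos] with ω hω
  exact div_mul_cancel₀ _ hω

theorem ae_eq_condRegression {g : Ω → ℝ} (hpos : ∀ᵐ ω ∂μ, μ[D | m] ω ≠ 0)
    (hg : g * μ[D | m] =ᵐ[μ] μ[D * Y | m]) : g =ᵐ[μ] condRegression μ m D Y := by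
  filter_upwards [hpos, hg] with ω hω hgω
  exact (eq_div_iff hω).mpr hgω

theorem abs_condRegression_le (hDY : ∀ᵐ ω ∂μ, |D ω * Y ω| ≤ C) (hε : 0 < ε)
    (hpos : ∀ᵐ ω ∂μ, ε ≤ μ[D | m] ω) : ∀ᵐ ω ∂μ, |condRegression μ m D Y ω| ≤ C / ε := by
  filter_upwards [ae_bdd_abs_condExp_of_ae_bdd_abs (m := m) hDY, hpos] with ω hnum hden
  rw [condRegression, abs_div, abs_of_pos (hε.trans_le hden)]
  exact (div_le_div_of_nonneg_left (abs_nonneg _) hε hden).trans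
    (div_le_div_of_nonneg_right hnum hε.le)

theorem integrable_condRegression [IsFiniteMeasure μ] (hm : m ≤ m0)
    (hDY : ∀ᵐ ω ∂μ, |D ω * Y ω| ≤ C) (hε : 0 < ε) (hpos : ∀ᵐ ω ∂μ, ε ≤ μ[D | m] ω) :
    Integrable (condRegression μ m D Y) μ :=
  .of_bound (stronglyMeasurable_condRegression.mono hm).aestronglyMeasurable _
    (abs_condRegression_le hDY hε hpos)

theorem integral_mul_condExp_of_aestronglyMeasurable [IsFiniteMeasure μ] (hm : m ≤ m0)
    {f g : Ω → ℝ} (hg : AEStronglyMeasurable[m] g μ) (hgf : Integrable (g * f) μ)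
    (hf : Integrable f μ) : ∫ ω, g ω * μ[f | m] ω ∂μ = ∫ ω, (g * f) ω ∂μ :=
  calc ∫ ω, g ω * μ[f | m] ω ∂μ = ∫ ω, μ[g * f | m] ω ∂μ :=
        integral_congr_ae (condExp_mul_of_aestronglyMeasurable_left hg hgf hf).symm
    _ = ∫ ω, (g * f) ω ∂μ := integral_condExp hm

theorem integral_mul_sub_condRegression_div_condExp [IsFiniteMeasure μ] (hm : m ≤ m0)
    (hD : Integrable D μ) (hDYint : Integrable (D * Y) μ) (hDY : ∀ᵐ ω ∂μ, |D ω * Y ω| ≤ C)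
    (hε : 0 < ε) (hpos : ∀ᵐ ω ∂μ, ε ≤ μ[D | m] ω) :
    ∫ ω, D ω * (Y ω - condRegression μ m D Y ω) / μ[D | m] ω ∂μ = 0 := by
  set q : Ω → ℝ := fun ω => (μ[D | m] ω)⁻¹ with hq_def
  have hne : ∀ᵐ ω ∂μ, μ[D | m] ω ≠ 0 := hpos.mono fun ω h => (hε.trans_le h).ne'
  have hq : StronglyMeasurable[m] q := stronglyMeasurable_condExp.measurable.inv.stronglyMeasurable
  have hq_le : ∀ᵐ ω ∂μ, ‖q ω‖ ≤ ε⁻¹ := hpos.mono fun ω h => by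
    rw [Real.norm_eq_abs, abs_inv, abs_of_pos (hε.trans_le h)]
    exact inv_anti₀ hε h
  have hqr_le : ∀ᵐ ω ∂μ, ‖q ω * condRegression μ m D Y ω‖ ≤ ε⁻¹ * (C / ε) := by
    filter_upwards [hq_le, abs_condRegression_le hDY hε hpos] with ω h1 h2
    rw [norm_mul]
    exact mul_le_mul h1 h2 (norm_nonneg _) (inv_nonneg.mpr hε.le)
  have hqr : StronglyMeasurable[m] (q * condRegression μ m D Y) :=
    hq.mul stronglyMeasurable_condRegression
  have hqDY : Integrable (q * (D * Y)) μ := hDYint.bdd_mul (hq.mono hm).aestronglyMeasurable hq_le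
  have hqrD : Integrable (q * condRegression μ m D Y * D) μ :=
    hD.bdd_mul (hqr.mono hm).aestronglyMeasurable hqr_le
  -- `q` is `m`-measurable, so `D * Y` and `D` may be replaced by their conditional expectations.
  have hY_term : ∫ ω, (q * (D * Y)) ω ∂μ = ∫ ω, condRegression μ m D Y ω ∂μ := by
    rw [← integral_mul_condExp_of_aestronglyMeasurable hm hq.aestronglyMeasurable hqDY hDYint]
    refine integral_congr_ae ?_
    filter_upwards [condRegression_mul_condExp (Y := Y) hne, hne] with ω h hω
    rw [← h]
    simp only [Pi.mul_apply, hq_def]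
    field_simp
  have hr_term : ∫ ω, (q * condRegression μ m D Y * D) ω ∂μ
      = ∫ ω, condRegression μ m D Y ω ∂μ := by
    rw [← integral_mul_condExp_of_aestronglyMeasurable hm hqr.aestronglyMeasurable hqrD hD]
    refine integral_congr_ae ?_
    filter_upwards [hne] with ω hω
    simp only [Pi.mul_apply, hq_def]
    field_simp
  calc ∫ ω, D ω * (Y ω - condRegression μ m D Y ω) / μ[D | m] ω ∂μ
      = ∫ ω, (q * (D * Y)) ω - (q * condRegression μ m D Y * D) ω ∂μ := by
        congr 1; ext ω; simp only [Pi.mul_apply, hq_def]; ring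
    _ = 0 := by rw [integral_sub hqDY hqrD, hY_term, hr_term, sub_self]

theorem condExp_condRegression_of_condExp_eq [IsFiniteMeasure μ] {m₁ m₂ : MeasurableSpace Ω}
    (h₁₂ : m₁ ≤ m₂) (h₂ : m₂ ≤ m0) (hDeq : μ[D | m₂] =ᵐ[μ] μ[D | m₁])
    (hDY : ∀ᵐ ω ∂μ, |D ω * Y ω| ≤ C) (hε : 0 < ε) (hpos : ∀ᵐ ω ∂μ, ε ≤ μ[D | m₁] ω) :
    μ[condRegression μ m₂ D Y | m₁] =ᵐ[μ] condRegression μ m₁ D Y := by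
  have hpos₂ : ∀ᵐ ω ∂μ, ε ≤ μ[D | m₂] ω := by
    filter_upwards [hpos, hDeq] with ω h h' using h' ▸ h
  have hne₁ : ∀ᵐ ω ∂μ, μ[D | m₁] ω ≠ 0 := hpos.mono fun ω h => (hε.trans_le h).ne'
  have hne₂ : ∀ᵐ ω ∂μ, μ[D | m₂] ω ≠ 0 := hpos₂.mono fun ω h => (hε.trans_le h).ne'
  have hswap : condRegression μ m₂ D Y * μ[D | m₁] =ᵐ[μ] μ[D * Y | m₂] :=
    ((Filter.EventuallyEq.refl _ _).mul hDeq.symm).trans (condRegression_mul_condExp hne₂)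
  refine ae_eq_condRegression hne₁ ?_
  calc μ[condRegression μ m₂ D Y | m₁] * μ[D | m₁]
      =ᵐ[μ] μ[condRegression μ m₂ D Y * μ[D | m₁] | m₁] :=
        (condExp_mul_of_stronglyMeasurable_right stronglyMeasurable_condExp
          (integrable_condExp.congr hswap.symm) (integrable_condRegression h₂ hDY hε hpos₂)).symm
    _ =ᵐ[μ] μ[μ[D * Y | m₂] | m₁] := condExp_congr_ae hswap
    _ =ᵐ[μ] μ[D * Y | m₁] := condExp_condExp_of_le h₁₂ h₂

theorem integral_mul_sub_condRegression_div_condExp_of_condExp_eq [IsFiniteMeasure μ]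
    {m₁ m₂ : MeasurableSpace Ω} (h₂ : m₂ ≤ m0) (hDeq : μ[D | m₂] =ᵐ[μ] μ[D | m₁])
    (hD : Integrable D μ) (hDYint : Integrable (D * Y) μ) (hDY : ∀ᵐ ω ∂μ, |D ω * Y ω| ≤ C)
    (hε : 0 < ε) (hpos : ∀ᵐ ω ∂μ, ε ≤ μ[D | m₁] ω) :
    ∫ ω, D ω * (Y ω - condRegression μ m₂ D Y ω) / μ[D | m₁] ω ∂μ = 0 := by
  rw [← integral_mul_sub_condRegression_div_condExp h₂ hD hDYint hDY hε
    (by filter_upwards [hpos, hDeq] with ω h h' using h' ▸ h)]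
  refine integral_congr_ae ?_
  filter_upwards [hDeq] with ω h
  rw [h]

theorem integral_condRegression_eq_of_condExp_eq [IsFiniteMeasure μ] {m₁ m₂ : MeasurableSpace Ω}
    (h₁₂ : m₁ ≤ m₂) (h₂ : m₂ ≤ m0) (hDeq : μ[D | m₂] =ᵐ[μ] μ[D | m₁])
    (hDY : ∀ᵐ ω ∂μ, |D ω * Y ω| ≤ C) (hε : 0 < ε) (hpos : ∀ᵐ ω ∂μ, ε ≤ μ[D | m₁] ω) :
    ∫ ω, condRegression μ m₂ D Y ω ∂μ = ∫ ω, condRegression μ m₁ D Y ω ∂μ := by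
  rw [← integral_condExp (h₁₂.trans h₂)]
  exact integral_congr_ae (condExp_condRegression_of_condExp_eq h₁₂ h₂ hDeq hDY hε hpos)

end Regression

/-- Generalized augmentation identity: with `D ⊥ Z̲ | Z*`, strict overlap for
`m(Z*) = P(D=1|Z*)`, bounded `Y`, and `g₁(Z*, s(Z̲)) = E[Y | D=1, Z*, s(Z̲)]`
(characterized by `E[D·Y | Z*, s(Z̲)] = g₁(Z*, s(Z̲))·P(D=1 | Z*, s(Z̲))`), one has
`E[D(Y - g₁(Z*, s(Z̲)))/m(Z*)] = 0` and `E[g₁(Z*, s(Z̲))] = E[E[Y | D=1, Z*]]`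
(the latter regression `G₁` characterized by `E[D·Y | Z*] = G₁(Z*)·m(Z*)`). -/
theorem stmt_18 {Ω γ δ κ : Type*} {mΩ : MeasurableSpace Ω} [StandardBorelSpace Ω]
    [MeasurableSpace γ] [MeasurableSpace δ] [MeasurableSpace κ]
    (μ : Measure Ω) [IsProbabilityMeasure μ]
    (D Y : Ω → ℝ) (Zstar : Ω → γ) (Zlow : Ω → δ) (s : δ → κ)
    (mW : γ × κ → ℝ) (g₁ : γ × κ → ℝ) (G₁ mZ : γ → ℝ)
    (hD : ∀ ω, D ω = 0 ∨ D ω = 1)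
    (hDmeas : Measurable D) (hZstar : Measurable Zstar) (hZlow : Measurable Zlow)
    (hs : Measurable s)
    (CY : ℝ) (hYbdd : ∀ ω, |Y ω| ≤ CY) (hYmeas : Measurable Y)
    (hcondindep : CondIndepFun (MeasurableSpace.comap Zstar inferInstance)
      hZstar.comap_le D Zlow μ)
    (ε : ℝ) (hε : ε ∈ Set.Ioo (0 : ℝ) (1 / 2))
    (hoverlap : ∀ᵐ ω ∂μ, ε < mZ (Zstar ω) ∧ mZ (Zstar ω) < 1 - ε)
    (hmZ : μ[D | MeasurableSpace.comap Zstar inferInstance]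
        =ᵐ[μ] fun ω => mZ (Zstar ω))
    (hmW : μ[D | MeasurableSpace.comap (fun ω => (Zstar ω, s (Zlow ω))) inferInstance]
        =ᵐ[μ] fun ω => mW (Zstar ω, s (Zlow ω)))
    (hg₁ : μ[fun ω => D ω * Y ω |
        MeasurableSpace.comap (fun ω => (Zstar ω, s (Zlow ω))) inferInstance]
        =ᵐ[μ] fun ω => g₁ (Zstar ω, s (Zlow ω)) * mW (Zstar ω, s (Zlow ω)))
    (hG₁ : μ[fun ω => D ω * Y ω | MeasurableSpace.comap Zstar inferInstance]
        =ᵐ[μ] fun ω => G₁ (Zstar ω) * mZ (Zstar ω)) :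
    (∫ ω, D ω * (Y ω - g₁ (Zstar ω, s (Zlow ω))) / mZ (Zstar ω) ∂μ) = 0 ∧
      (∫ ω, g₁ (Zstar ω, s (Zlow ω)) ∂μ) = ∫ ω, G₁ (Zstar ω) ∂μ := by
  have hW : Measurable fun ω => (Zstar ω, s (Zlow ω)) := hZstar.prodMk (hs.comp hZlow)
  have hDeq : μ[D | MeasurableSpace.comap (fun ω => (Zstar ω, s (Zlow ω))) inferInstance]
      =ᵐ[μ] μ[D | MeasurableSpace.comap Zstar inferInstance] :=
    condExp_comap_prodMk_ae_eq_of_zero_or_one (V := fun ω => s (Zlow ω)) hZstar hD hDmeas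
      (hs.comp hZlow) (hcondindep.comp measurable_id hs)
  have hpos : ∀ᵐ ω ∂μ, ε ≤ μ[D | MeasurableSpace.comap Zstar inferInstance] ω := by
    filter_upwards [hmZ, hoverlap] with ω h h' using h ▸ h'.1.le
  have hDY : ∀ ω, |D ω * Y ω| ≤ CY := fun ω => by
    rcases hD ω with h | h <;> simp [h, (abs_nonneg _).trans (hYbdd ω), hYbdd ω]
  have hDYint : Integrable (D * Y) μ :=
    .of_bound (hDmeas.mul hYmeas).aestronglyMeasurable CY (.of_forall hDY)
  have hDint : Integrable D μ := .of_bound hDmeas.aestronglyMeasurable 1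
    (.of_forall fun ω => by rcases hD ω with h | h <;> simp [h])
  have hg : (fun ω => g₁ (Zstar ω, s (Zlow ω))) =ᵐ[μ]
      condRegression μ (MeasurableSpace.comap (fun ω => (Zstar ω, s (Zlow ω))) inferInstance) D Y :=
    ae_eq_condRegression
      (by filter_upwards [hpos, hDeq] with ω h h' using h' ▸ (hε.1.trans_le h).ne')
      (by filter_upwards [hg₁, hmW] with ω h h' using by rw [Pi.mul_apply, h']; exact h.symm)
  have hG : (fun ω => G₁ (Zstar ω)) =ᵐ[μ]
      condRegression μ (MeasurableSpace.comap Zstar inferInstance) D Y :=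
    ae_eq_condRegression (hpos.mono fun ω h => (hε.1.trans_le h).ne')
      (by filter_upwards [hG₁, hmZ] with ω h h' using by rw [Pi.mul_apply, h']; exact h.symm)
  refine ⟨?_, ?_⟩
  · rw [← integral_mul_sub_condRegression_div_condExp_of_condExp_eq hW.comap_le hDeq hDint
      hDYint (.of_forall hDY) hε.1 hpos]
    refine integral_congr_ae ?_
    filter_upwards [hg, hmZ] with ω h h'
    rw [h, h']
  · rw [integral_congr_ae hg, integral_congr_ae hG, integral_condRegression_eq_of_condExp_eq
      (comap_le_comap_prodMk _ _) hW.comap_le hDeq (.of_forall hDY) hε.1 hpos]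
end
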